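/- arXiv:2011.01392 — 2 statements merged into one kernel-verified Lean document; each statement's English description precedes it below -/
import Mathlib

section
/- In the mobility-driven epidemic model, the number of hospitalized individuals H(t) at any time t ≥ 0 is a posynomial function of the control variables: for each t there is a posynomial p on ℝ_{>0}^{K·t} (in the K·t variables given by the entries of u(0),…,u(t−1)) such that H(t) = p(u(0),…,u(t−1)) for all positive control sequences. -/
/-!
Posynomials on the positive orthant are closed under sums, products, multiplication by positive
constants and substitution of variables `x ↦ x ∘ σ`. One step of the model builds each new
compartment from the old ones and from `β(t)`, a posynomial in `u(t)`, using only these operations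
with positive coefficients (the retention factors `1 - ρ…` are positive by the rate constraints).
By induction on `t`, all four compartments are posynomials in `u(0), …, u(t-1)`.
-/

/-- A posynomial on the positive orthant: a finite sum of one or more monomials
`c_i * ∏_j x_j ^ a_{i,j}` with positive coefficients and real exponents. -/
def IsPosynomial {ι : Type*} [Fintype ι] (f : (ι → ℝ) → ℝ) : Prop :=
  ∃ k : ℕ, 0 < k ∧ ∃ (c : Fin k → ℝ) (a : Fin k → ι → ℝ),
    (∀ i, 0 < c i) ∧
    ∀ x : ι → ℝ, (∀ j, 0 < x j) → f x = ∑ i, c i * ∏ j, x j ^ a i j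

/-- The state `(E(t), I(t), A(t), H(t))` of the mobility-driven epidemic model, where
the infection rate at time `t` is `β(t) = Σ_k θ_k (u_k(t))^(α_k) + b`. -/
noncomputable def epiState (K : ℕ) (θ a : Fin K → ℝ)
    (b S0 γA ρEI ρEA ρIR ρIH ρAR ρHR ρHD E0 I0 A0 H0 : ℝ)
    (u : ℕ → Fin K → ℝ) : ℕ → ℝ × ℝ × ℝ × ℝ
  | 0 => (E0, I0, A0, H0)
  | t + 1 =>
    let s := epiState K θ a b S0 γA ρEI ρEA ρIR ρIH ρAR ρHR ρHD E0 I0 A0 H0 u t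
    let β : ℝ := (∑ k, θ k * u t k ^ a k) + b
    ((1 - ρEI - ρEA) * s.1 + S0 * β * (γA * s.2.2.1 + s.2.1),
     (1 - ρIR - ρIH) * s.2.1 + ρEI * s.1,
     (1 - ρAR) * s.2.2.1 + ρEA * s.1,
     (1 - ρHR - ρHD) * s.2.2.2 + ρIH * s.2.1)

/-- The cumulative deaths `D(t)` of the mobility-driven epidemic model:
`D(t+1) = D(t) + α_D ρ_HR H(t)`. -/
noncomputable def epiD (K : ℕ) (θ a : Fin K → ℝ)
    (b S0 γA ρEI ρEA ρIR ρIH ρAR ρHR ρHD E0 I0 A0 H0 αD D0 : ℝ)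
    (u : ℕ → Fin K → ℝ) : ℕ → ℝ
  | 0 => D0
  | t + 1 => epiD K θ a b S0 γA ρEI ρEA ρIR ρIH ρAR ρHR ρHD E0 I0 A0 H0 αD D0 u t +
      αD * ρHR * (epiState K θ a b S0 γA ρEI ρEA ρIR ρIH ρAR ρHR ρHD E0 I0 A0 H0 u t).2.2.2

namespace IsPosynomial

variable {ι κ : Type*} [Fintype ι] [Fintype κ]

theorem of_fintype {α : Type*} [Fintype α] [Nonempty α] {f : (ι → ℝ) → ℝ}
    (c : α → ℝ) (e : α → ι → ℝ) (hc : ∀ i, 0 < c i)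
    (hf : ∀ x : ι → ℝ, (∀ j, 0 < x j) → f x = ∑ i, c i * ∏ j, x j ^ e i j) :
    IsPosynomial f := by
  let σ := Fintype.equivFin α
  refine ⟨Fintype.card α, Fintype.card_pos, c ∘ σ.symm, e ∘ σ.symm, fun i => hc _,
    fun x hx => ?_⟩
  rw [hf x hx, ← σ.symm.sum_comp]
  rfl

theorem const {c : ℝ} (hc : 0 < c) : IsPosynomial fun _ : ι → ℝ => c :=
  ⟨1, one_pos, fun _ => c, fun _ _ => 0, fun _ => hc, fun x _ => by simp⟩

theorem const_mul_rpow {c : ℝ} (hc : 0 < c) (j : ι) (r : ℝ) :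
    IsPosynomial fun x : ι → ℝ => c * x j ^ r := by
  classical
  refine ⟨1, one_pos, fun _ => c, fun _ => Pi.single j r, fun _ => hc, fun x _ => ?_⟩
  rw [Fin.sum_univ_one, Fintype.prod_eq_single j fun i hi => by simp [hi]]
  simp

theorem add {f g : (ι → ℝ) → ℝ} (hf : IsPosynomial f) (hg : IsPosynomial g) :
    IsPosynomial fun x => f x + g x := by
  obtain ⟨k, hk, c, e, hc, hfe⟩ := hf
  obtain ⟨l, -, d, e', hd, hge⟩ := hg
  have := Fin.pos_iff_nonempty.1 hk
  refine of_fintype (Sum.elim c d) (Sum.elim e e') (Sum.forall.2 ⟨hc, hd⟩) fun x hx => ?_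
  simp only [hfe x hx, hge x hx, Fintype.sum_sum_type, Sum.elim_inl, Sum.elim_inr]

theorem mul {f g : (ι → ℝ) → ℝ} (hf : IsPosynomial f) (hg : IsPosynomial g) :
    IsPosynomial fun x => f x * g x := by
  obtain ⟨k, hk, c, e, hc, hfe⟩ := hf
  obtain ⟨l, hl, d, e', hd, hge⟩ := hg
  have := Fin.pos_iff_nonempty.1 hk
  have := Fin.pos_iff_nonempty.1 hl
  refine of_fintype (fun p : Fin k × Fin l => c p.1 * d p.2) (fun p j => e p.1 j + e' p.2 j)
    (fun p => mul_pos (hc p.1) (hd p.2)) fun x hx => ?_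
  simp only [hfe x hx, hge x hx, Finset.sum_mul_sum, Fintype.sum_prod_type,
    Real.rpow_add (hx _), Finset.prod_mul_distrib]
  exact Finset.sum_congr rfl fun i _ => Finset.sum_congr rfl fun i' _ => by ring

theorem const_mul {c : ℝ} (hc : 0 < c) {f : (ι → ℝ) → ℝ} (hf : IsPosynomial f) :
    IsPosynomial fun x => c * f x :=
  (const hc).mul hf

theorem sum_add {α : Type*} (s : Finset α) {f : α → (ι → ℝ) → ℝ} {g : (ι → ℝ) → ℝ}
    (hf : ∀ i ∈ s, IsPosynomial (f i)) (hg : IsPosynomial g) :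
    IsPosynomial fun x => ∑ i ∈ s, f i x + g x := by
  classical
  induction s using Finset.induction_on with
  | empty => simpa using hg
  | insert i s hi ih =>
    simp only [Finset.sum_insert hi, add_assoc]
    exact (hf i (s.mem_insert_self i)).add (ih fun j hj => hf j (Finset.mem_insert_of_mem hj))

/-- Substituting `x ∘ σ` merges the exponents of the variables that `σ` identifies. -/
theorem comp {f : (ι → ℝ) → ℝ} (hf : IsPosynomial f) (σ : ι → κ) :
    IsPosynomial fun x : κ → ℝ => f (x ∘ σ) := by
  classical
  obtain ⟨k, hk, c, e, hc, hfe⟩ := hf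
  refine ⟨k, hk, c, fun i j => ∑ l with σ l = j, e i l, hc, fun x hx => ?_⟩
  dsimp only
  rw [hfe (x ∘ σ) fun l => hx (σ l)]
  refine Finset.sum_congr rfl fun i _ => congrArg (c i * ·) ?_
  simp only [Real.rpow_sum_of_pos (hx _)]
  rw [← Finset.prod_fiberwise Finset.univ σ]
  refine Finset.prod_congr rfl fun j _ => Finset.prod_congr rfl fun l hl => ?_
  rw [Function.comp_apply, (Finset.mem_filter.1 hl).2]

end IsPosynomial

section EpidemicModel

variable {K : ℕ} {θ a : Fin K → ℝ}
  {b S0 γA ρEI ρEA ρIR ρIH ρAR ρHR ρHD E0 I0 A0 H0 : ℝ}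

theorem isPosynomial_infectionRate (hθ : ∀ k, 0 < θ k) (hb : 0 < b) :
    IsPosynomial fun m : Fin K → ℝ => ∑ k, θ k * m k ^ a k + b :=
  IsPosynomial.sum_add Finset.univ (fun k _ => IsPosynomial.const_mul_rpow (hθ k) k (a k))
    (IsPosynomial.const hb)

theorem exists_isPosynomial_epiState (hθ : ∀ k, 0 < θ k) (hb : 0 < b) (hS0 : 0 < S0)
    (hγA : 0 < γA) (hρEI : 0 < ρEI) (hρEA : 0 < ρEA) (hρIH : 0 < ρIH)
    (hEsum : ρEI + ρEA < 1) (hIsum : ρIR + ρIH < 1) (hAsum : ρAR < 1)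
    (hHsum : ρHR + ρHD < 1) (hE0 : 0 < E0) (hI0 : 0 < I0) (hA0 : 0 < A0) (hH0 : 0 < H0)
    (t : ℕ) :
    ∃ pE pI pA pH : (Fin t × Fin K → ℝ) → ℝ,
      IsPosynomial pE ∧ IsPosynomial pI ∧ IsPosynomial pA ∧ IsPosynomial pH ∧
      ∀ u : ℕ → Fin K → ℝ,
        epiState K θ a b S0 γA ρEI ρEA ρIR ρIH ρAR ρHR ρHD E0 I0 A0 H0 u t =
          (pE fun q => u q.1 q.2, pI fun q => u q.1 q.2,
            pA fun q => u q.1 q.2, pH fun q => u q.1 q.2) := by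
  induction t with
  | zero =>
    exact ⟨_, _, _, _, .const hE0, .const hI0, .const hA0, .const hH0, fun _ => rfl⟩
  | succ t ih =>
    obtain ⟨pE, pI, pA, pH, hE, hI, hA, hH, hstate⟩ := ih
    let past : Fin t × Fin K → Fin (t + 1) × Fin K := Prod.map Fin.castSucc id
    let current : Fin K → Fin (t + 1) × Fin K := (Fin.last t, ·)
    have hβ := (isPosynomial_infectionRate (a := a) hθ hb).comp current
    refine ⟨fun x => (1 - ρEI - ρEA) * pE (x ∘ past) +
        S0 * (∑ k, θ k * (x ∘ current) k ^ a k + b) * (γA * pA (x ∘ past) + pI (x ∘ past)),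
      fun x => (1 - ρIR - ρIH) * pI (x ∘ past) + ρEI * pE (x ∘ past),
      fun x => (1 - ρAR) * pA (x ∘ past) + ρEA * pE (x ∘ past),
      fun x => (1 - ρHR - ρHD) * pH (x ∘ past) + ρIH * pI (x ∘ past),
      ?_, ?_, ?_, ?_, fun u => ?_⟩
    · exact ((hE.comp past).const_mul (by linarith)).add
        ((hβ.const_mul hS0).mul (((hA.comp past).const_mul hγA).add (hI.comp past)))
    · exact ((hI.comp past).const_mul (by linarith)).add ((hE.comp past).const_mul hρEI)
    · exact ((hA.comp past).const_mul (by linarith)).add ((hE.comp past).const_mul hρEA)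
    · exact ((hH.comp past).const_mul (by linarith)).add ((hI.comp past).const_mul hρIH)
    · -- `Fin.castSucc` and `Fin.last` keep the underlying index, so the states agree by unfolding.
      rw [epiState, hstate u]
      rfl

end EpidemicModel

theorem hospitalizations_isPosynomial_general (K : ℕ) (θ a : Fin K → ℝ)
    (b S0 γA ρEI ρEA ρIR ρIH ρAR ρHR ρHD E0 I0 A0 H0 : ℝ)
    (hθ : ∀ k, 0 < θ k) (hb : 0 < b) (hS0 : 0 < S0) (hγA : 0 < γA)
    (hρEI : 0 < ρEI) (hρEA : 0 < ρEA) (hρIH : 0 < ρIH)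
    (hEsum : ρEI + ρEA < 1) (hIsum : ρIR + ρIH < 1) (hAsum : ρAR < 1)
    (hHsum : ρHR + ρHD < 1)
    (hE0 : 0 < E0) (hI0 : 0 < I0) (hA0 : 0 < A0) (hH0 : 0 < H0)
    (t : ℕ) :
    ∃ p : (Fin t × Fin K → ℝ) → ℝ, IsPosynomial p ∧
      ∀ u : ℕ → Fin K → ℝ, (∀ s k, 0 < u s k) →
        (epiState K θ a b S0 γA ρEI ρEA ρIR ρIH ρAR ρHR ρHD E0 I0 A0 H0 u t).2.2.2 =
          p (fun q => u (q.1 : ℕ) q.2) := by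
  obtain ⟨_, _, _, pH, _, _, _, hpH, hstate⟩ :=
    exists_isPosynomial_epiState (a := a) hθ hb hS0 hγA hρEI hρEA hρIH hEsum hIsum hAsum hHsum
      hE0 hI0 hA0 hH0 t
  exact ⟨pH, hpH, fun u _ => by rw [hstate]⟩

/-- In the mobility-driven epidemic model, the number of hospitalized individuals `H(t)`
is a posynomial function of the `K·t` control variables (the entries of
`u(0), …, u(t-1)`), for every positive control sequence. -/
theorem hospitalizations_isPosynomial (K : ℕ) (θ a : Fin K → ℝ)
    (b S0 γA ρEI ρEA ρIR ρIH ρAR ρHR ρHD E0 I0 A0 H0 : ℝ)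
    (hθ : ∀ k, 0 < θ k) (hb : 0 < b) (hS0 : 0 < S0) (hγA : 0 < γA)
    (hρEI : 0 < ρEI) (hρEA : 0 < ρEA) (hρIR : 0 < ρIR) (hρIH : 0 < ρIH)
    (hρAR : 0 < ρAR) (hρHR : 0 < ρHR) (hρHD : 0 < ρHD)
    (hEsum : ρEI + ρEA < 1) (hIsum : ρIR + ρIH < 1) (hAsum : ρAR < 1)
    (hHsum : ρHR + ρHD < 1)
    (hE0 : 0 < E0) (hI0 : 0 < I0) (hA0 : 0 < A0) (hH0 : 0 < H0)
    (t : ℕ) :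
    ∃ p : (Fin t × Fin K → ℝ) → ℝ, IsPosynomial p ∧
      ∀ u : ℕ → Fin K → ℝ, (∀ s k, 0 < u s k) →
        (epiState K θ a b S0 γA ρEI ρEA ρIR ρIH ρAR ρHR ρHD E0 I0 A0 H0 u t).2.2.2 =
          p (fun q => u (q.1 : ℕ) q.2) :=
  hospitalizations_isPosynomial_general K θ a b S0 γA ρEI ρEA ρIR ρIH ρAR ρHR ρHD E0 I0 A0 H0 hθ hb
    hS0 hγA hρEI hρEA hρIH hEsum hIsum hAsum hHsum hE0 hI0 hA0 hH0 t
end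

section
/- In the mobility-driven epidemic model, the discounted-death objective is convex in the logarithm of the controls: with γ_D ∈ (0,1) and γ_∞ > 0, the function G : ℝ^{K·T} → ℝ defined by G(v) = log( Σ_{t=1}^{T−1} γ_D^t D(t) + γ_∞ D(T) ), where the states are evaluated at the controls u(s) = exp(v(s)) (componentwise exponential, s = 0,…,T−1), is convex on ℝ^{K·T}. -/
/-!
Call a function log-convex if it is positive with convex logarithm. Log-convex functions are
closed under positive scaling, products and sums, the last by the two-term Hölder inequality
`p^A q^B + r^A s^B ≤ (p + r)^A (q + s)^B`. In log-coordinates each control enters through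
`exp (linear)`, which is log-convex, and every state of the model is built from the controls and
positive constants by these operations, so the discounted death count is log-convex.
-/

open Real

theorem rpow_mul_rpow_add_rpow_mul_rpow_le {p q r s A B : ℝ} (hp : 0 < p) (hq : 0 < q)
    (hr : 0 < r) (hs : 0 < s) (hA : 0 ≤ A) (hB : 0 ≤ B) (hAB : A + B = 1) :
    p ^ A * q ^ B + r ^ A * s ^ B ≤ (p + r) ^ A * (q + s) ^ B := by
  have hP : 0 < p + r := by positivity
  have hQ : 0 < q + s := by positivity
  have hnormalized : (p / (p + r)) ^ A * (q / (q + s)) ^ B + (r / (p + r)) ^ A * (s / (q + s)) ^ B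
      ≤ 1 :=
    calc _ ≤ (A * (p / (p + r)) + B * (q / (q + s))) + (A * (r / (p + r)) + B * (s / (q + s))) :=
          add_le_add
            (geom_mean_le_arith_mean2_weighted hA hB (by positivity) (by positivity) hAB)
            (geom_mean_le_arith_mean2_weighted hA hB (by positivity) (by positivity) hAB)
      _ = A * ((p + r) / (p + r)) + B * ((q + s) / (q + s)) := by ring
      _ = 1 := by rw [div_self hP.ne', div_self hQ.ne', mul_one, mul_one, hAB]
  rwa [div_rpow hp.le hP.le, div_rpow hq.le hQ.le, div_rpow hr.le hP.le, div_rpow hs.le hQ.le,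
    div_mul_div_comm, div_mul_div_comm, ← add_div, div_le_one (by positivity)] at hnormalized

section LogConvex

variable {E : Type*} [AddCommGroup E] [Module ℝ E] {s : Set E} {f g : E → ℝ}

/-- Positivity is part of the definition, since `Real.log` is junk on nonpositive numbers. -/
def LogConvexOn (s : Set E) (f : E → ℝ) : Prop :=
  (∀ x ∈ s, 0 < f x) ∧ ConvexOn ℝ s fun x => log (f x)

theorem LogConvexOn.le_rpow_mul_rpow (hf : LogConvexOn s f) {x y : E} (hx : x ∈ s) (hy : y ∈ s)
    {a b : ℝ} (ha : 0 ≤ a) (hb : 0 ≤ b) (hab : a + b = 1) :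
    f (a • x + b • y) ≤ f x ^ a * f y ^ b := by
  have hlog := hf.2.2 hx hy ha hb hab
  simp only [smul_eq_mul] at hlog
  calc f (a • x + b • y) = exp (log (f (a • x + b • y))) :=
        (exp_log (hf.1 _ (hf.2.1 hx hy ha hb hab))).symm
    _ ≤ exp (a * log (f x) + b * log (f y)) := exp_le_exp.2 hlog
    _ = f x ^ a * f y ^ b := by
        rw [exp_add, mul_comm a, mul_comm b, ← rpow_def_of_pos (hf.1 x hx),
          ← rpow_def_of_pos (hf.1 y hy)]

theorem LogConvexOn.add (hf : LogConvexOn s f) (hg : LogConvexOn s g) :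
    LogConvexOn s fun x => f x + g x := by
  refine ⟨fun x hx => add_pos (hf.1 x hx) (hg.1 x hx), hf.2.1, ?_⟩
  intro x hx y hy a b ha hb hab
  have hfgx := add_pos (hf.1 x hx) (hg.1 x hx)
  have hfgy := add_pos (hf.1 y hy) (hg.1 y hy)
  have hz := hf.2.1 hx hy ha hb hab
  have hle : f (a • x + b • y) + g (a • x + b • y) ≤ (f x + g x) ^ a * (f y + g y) ^ b :=
    (add_le_add (hf.le_rpow_mul_rpow hx hy ha hb hab) (hg.le_rpow_mul_rpow hx hy ha hb hab)).trans
      (rpow_mul_rpow_add_rpow_mul_rpow_le (hf.1 x hx) (hf.1 y hy) (hg.1 x hx) (hg.1 y hy)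
        ha hb hab)
  calc log (f (a • x + b • y) + g (a • x + b • y))
      ≤ log ((f x + g x) ^ a * (f y + g y) ^ b) :=
        log_le_log (add_pos (hf.1 _ hz) (hg.1 _ hz)) hle
    _ = a • log (f x + g x) + b • log (f y + g y) := by
        rw [log_mul (rpow_pos_of_pos hfgx a).ne' (rpow_pos_of_pos hfgy b).ne', log_rpow hfgx,
          log_rpow hfgy, smul_eq_mul, smul_eq_mul]

theorem LogConvexOn.mul (hf : LogConvexOn s f) (hg : LogConvexOn s g) :
    LogConvexOn s fun x => f x * g x :=
  ⟨fun x hx => mul_pos (hf.1 x hx) (hg.1 x hx),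
    (hf.2.add hg.2).congr fun x hx => (log_mul (hf.1 x hx).ne' (hg.1 x hx).ne').symm⟩

theorem logConvexOn_const (hs : Convex ℝ s) {c : ℝ} (hc : 0 < c) : LogConvexOn s fun _ => c :=
  ⟨fun _ _ => hc, convexOn_const _ hs⟩

theorem LogConvexOn.const_mul (hf : LogConvexOn s f) {c : ℝ} (hc : 0 < c) :
    LogConvexOn s fun x => c * f x :=
  (logConvexOn_const hf.2.1 hc).mul hf

theorem logConvexOn_exp (hg : ConvexOn ℝ s g) : LogConvexOn s fun x => exp (g x) :=
  ⟨fun _ _ => exp_pos _, by simpa only [log_exp] using hg⟩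

theorem LogConvexOn.sum_add {ι : Type*} {t : Finset ι} {F : ι → E → ℝ}
    (hF : ∀ i ∈ t, LogConvexOn s (F i)) (hg : LogConvexOn s g) :
    LogConvexOn s fun x => ∑ i ∈ t, F i x + g x := by
  classical
  induction t using Finset.induction with
  | empty => simpa using hg
  | insert i t hi ih =>
    simpa only [Finset.sum_insert hi, add_assoc] using
      (hF i (Finset.mem_insert_self i t)).add (ih fun j hj => hF j (Finset.mem_insert_of_mem hj))

end LogConvex

section Epidemic

variable {E : Type*} [AddCommGroup E] [Module ℝ E] {s : Set E}
  {K : ℕ} {θ a : Fin K → ℝ} {b S0 γA ρEI ρEA ρIR ρIH ρAR ρHR ρHD E0 I0 A0 H0 αD D0 : ℝ}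

theorem logConvexOn_infectionRate (hs : Convex ℝ s) (ℓ : E →ₗ[ℝ] Fin K → ℝ)
    (hθ : ∀ k, 0 < θ k) (hb : 0 < b) :
    LogConvexOn s fun x => ∑ k, θ k * exp (ℓ x k) ^ a k + b := by
  refine LogConvexOn.sum_add (fun k _ => LogConvexOn.const_mul ?_ (hθ k)) (logConvexOn_const hs hb)
  simp only [← exp_mul]
  refine logConvexOn_exp ((a k • LinearMap.proj k ∘ₗ ℓ).convexOn hs |>.congr fun x _ => ?_)
  simp [mul_comm]

theorem epiState_logConvexOn (hs : Convex ℝ s) (u : E → ℕ → Fin K → ℝ)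
    (hβ : ∀ t, LogConvexOn s fun x => ∑ k, θ k * u x t k ^ a k + b)
    (hS0 : 0 < S0) (hγA : 0 < γA) (hρEI : 0 < ρEI) (hρEA : 0 < ρEA) (hρIH : 0 < ρIH)
    (hEsum : ρEI + ρEA < 1) (hIsum : ρIR + ρIH < 1) (hAsum : ρAR < 1) (hHsum : ρHR + ρHD < 1)
    (hE0 : 0 < E0) (hI0 : 0 < I0) (hA0 : 0 < A0) (hH0 : 0 < H0) (t : ℕ) :
    LogConvexOn s (fun x =>
        (epiState K θ a b S0 γA ρEI ρEA ρIR ρIH ρAR ρHR ρHD E0 I0 A0 H0 (u x) t).1) ∧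
      LogConvexOn s (fun x =>
        (epiState K θ a b S0 γA ρEI ρEA ρIR ρIH ρAR ρHR ρHD E0 I0 A0 H0 (u x) t).2.1) ∧
      LogConvexOn s (fun x =>
        (epiState K θ a b S0 γA ρEI ρEA ρIR ρIH ρAR ρHR ρHD E0 I0 A0 H0 (u x) t).2.2.1) ∧
      LogConvexOn s (fun x =>
        (epiState K θ a b S0 γA ρEI ρEA ρIR ρIH ρAR ρHR ρHD E0 I0 A0 H0 (u x) t).2.2.2) := by
  induction t with
  | zero =>
    exact ⟨logConvexOn_const hs hE0, logConvexOn_const hs hI0, logConvexOn_const hs hA0,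
      logConvexOn_const hs hH0⟩
  | succ t ih =>
    obtain ⟨hE, hI, hA, hH⟩ := ih
    exact ⟨(hE.const_mul (by linarith)).add
        (((hβ t).const_mul hS0).mul ((hA.const_mul hγA).add hI)),
      (hI.const_mul (by linarith)).add (hE.const_mul hρEI),
      (hA.const_mul (by linarith)).add (hE.const_mul hρEA),
      (hH.const_mul (by linarith)).add (hI.const_mul hρIH)⟩

theorem epiD_logConvexOn (hs : Convex ℝ s) (u : E → ℕ → Fin K → ℝ)
    (hβ : ∀ t, LogConvexOn s fun x => ∑ k, θ k * u x t k ^ a k + b)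
    (hS0 : 0 < S0) (hγA : 0 < γA) (hαD : 0 < αD) (hρEI : 0 < ρEI) (hρEA : 0 < ρEA)
    (hρIH : 0 < ρIH) (hρHR : 0 < ρHR)
    (hEsum : ρEI + ρEA < 1) (hIsum : ρIR + ρIH < 1) (hAsum : ρAR < 1) (hHsum : ρHR + ρHD < 1)
    (hE0 : 0 < E0) (hI0 : 0 < I0) (hA0 : 0 < A0) (hH0 : 0 < H0) (hD0 : 0 < D0) (t : ℕ) :
    LogConvexOn s fun x =>
      epiD K θ a b S0 γA ρEI ρEA ρIR ρIH ρAR ρHR ρHD E0 I0 A0 H0 αD D0 (u x) t := by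
  induction t with
  | zero => exact logConvexOn_const hs hD0
  | succ t ih =>
    exact ih.add ((epiState_logConvexOn hs u hβ hS0 hγA hρEI hρEA hρIH hEsum hIsum hAsum hHsum
      hE0 hI0 hA0 hH0 t).2.2.2.const_mul (by positivity))

end Epidemic

theorem objective_convexOn_log_scale_general (K : ℕ) (θ a : Fin K → ℝ)
    (b S0 γA ρEI ρEA ρIR ρIH ρAR ρHR ρHD E0 I0 A0 H0 αD D0 : ℝ)
    (hθ : ∀ k, 0 < θ k) (hb : 0 < b) (hS0 : 0 < S0) (hγA : 0 < γA) (hαD : 0 < αD)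
    (hρEI : 0 < ρEI) (hρEA : 0 < ρEA) (hρIH : 0 < ρIH)
    (hρHR : 0 < ρHR)
    (hEsum : ρEI + ρEA < 1) (hIsum : ρIR + ρIH < 1) (hAsum : ρAR < 1)
    (hHsum : ρHR + ρHD < 1)
    (hE0 : 0 < E0) (hI0 : 0 < I0) (hA0 : 0 < A0) (hH0 : 0 < H0) (hD0 : 0 < D0)
    (T : ℕ) (γD γinf : ℝ) (hγD0 : 0 < γD) (hγinf : 0 < γinf) :
    ConvexOn ℝ (Set.univ : Set (Fin T × Fin K → ℝ)) (fun v =>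
      Real.log (
        (∑ t ∈ Finset.Ico 1 T, γD ^ t *
            epiD K θ a b S0 γA ρEI ρEA ρIR ρIH ρAR ρHR ρHD E0 I0 A0 H0 αD D0
              (fun s k => Real.exp (if hs : s < T then v (⟨s, hs⟩, k) else 0)) t)
        + γinf *
            epiD K θ a b S0 γA ρEI ρEA ρIR ρIH ρAR ρHR ρHD E0 I0 A0 H0 αD D0
              (fun s k => Real.exp (if hs : s < T then v (⟨s, hs⟩, k) else 0)) T)) := by
  let logControl : (Fin T × Fin K → ℝ) →ₗ[ℝ] ℕ → Fin K → ℝ :=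
    { toFun := fun v s k => if hs : s < T then v (⟨s, hs⟩, k) else 0
      map_add' := fun v w => by ext s k; by_cases hs : s < T <;> simp [hs]
      map_smul' := fun c v => by ext s k; by_cases hs : s < T <;> simp [hs] }
  have hβ (t : ℕ) := logConvexOn_infectionRate (a := a) convex_univ
    (LinearMap.proj t ∘ₗ logControl) hθ hb
  have hD := epiD_logConvexOn convex_univ (fun v s k => exp (logControl v s k)) hβ hS0 hγA hαD
    hρEI hρEA hρIH hρHR hEsum hIsum hAsum hHsum hE0 hI0 hA0 hH0 hD0
  exact (LogConvexOn.sum_add (fun t _ => (hD t).const_mul (pow_pos hγD0 t))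
    ((hD T).const_mul hγinf)).2

/-- In the mobility-driven epidemic model, the discounted-death objective is convex in
the logarithm of the controls: the function
`G(v) = log (Σ_{t=1}^{T-1} γ_D^t D(t) + γ_∞ D(T))`, where the states are evaluated at the
controls `u(s) = exp (v(s))` (componentwise, for `s = 0, …, T-1`), is convex on `ℝ^{K·T}`. -/
theorem objective_convexOn_log_scale (K : ℕ) (θ a : Fin K → ℝ)
    (b S0 γA ρEI ρEA ρIR ρIH ρAR ρHR ρHD E0 I0 A0 H0 αD D0 : ℝ)
    (hθ : ∀ k, 0 < θ k) (hb : 0 < b) (hS0 : 0 < S0) (hγA : 0 < γA) (hαD : 0 < αD)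
    (hρEI : 0 < ρEI) (hρEA : 0 < ρEA) (hρIR : 0 < ρIR) (hρIH : 0 < ρIH)
    (hρAR : 0 < ρAR) (hρHR : 0 < ρHR) (hρHD : 0 < ρHD)
    (hEsum : ρEI + ρEA < 1) (hIsum : ρIR + ρIH < 1) (hAsum : ρAR < 1)
    (hHsum : ρHR + ρHD < 1)
    (hE0 : 0 < E0) (hI0 : 0 < I0) (hA0 : 0 < A0) (hH0 : 0 < H0) (hD0 : 0 < D0)
    (T : ℕ) (γD γinf : ℝ) (hγD0 : 0 < γD) (hγD1 : γD < 1) (hγinf : 0 < γinf) :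
    ConvexOn ℝ (Set.univ : Set (Fin T × Fin K → ℝ)) (fun v =>
      Real.log (
        (∑ t ∈ Finset.Ico 1 T, γD ^ t *
            epiD K θ a b S0 γA ρEI ρEA ρIR ρIH ρAR ρHR ρHD E0 I0 A0 H0 αD D0
              (fun s k => Real.exp (if hs : s < T then v (⟨s, hs⟩, k) else 0)) t)
        + γinf *
            epiD K θ a b S0 γA ρEI ρEA ρIR ρIH ρAR ρHR ρHD E0 I0 A0 H0 αD D0
              (fun s k => Real.exp (if hs : s < T then v (⟨s, hs⟩, k) else 0)) T)) :=
  objective_convexOn_log_scale_general K θ a b S0 γA ρEI ρEA ρIR ρIH ρAR ρHR ρHD E0 I0 A0 H0 αD D0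
    hθ hb hS0 hγA hαD hρEI hρEA hρIH hρHR hEsum hIsum hAsum hHsum hE0 hI0 hA0 hH0 hD0 T γD γinf hγD0
    hγinf
end
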